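/- arXiv:2204.01378 — 2 statements merged into one kernel-verified Lean document; each statement's English description precedes it below -/
import Mathlib

section
/- Let 1 < β < 2, 1/β + 1/β′ = 1, and let φ : (0,∞) → [0,∞) be measurable with S := sup_{t>0} φ(t) < ∞ and I := ∫₀^∞ e^{−λt} φ(t) dt < ∞, where λ > 0. Then for any δ > 0, ∫₀^δ e^{−λt} t^{−1/2} φ(t) dt ≤ (δ^{1/β − 1/2} / (1−β/2)^{1/β}) · S^{1/β} · I^{1/β′}, obtained by Hölder's inequality splitting t^{−1/2}φ = (t^{−β/2}φ)^{1/β}·φ^{1/β′}; consequently, choosing δ = I/S, one gets ∫₀^∞ e^{−λt} t^{−1/2} φ(t) dt ≤ C · I^{1/2} · S^{1/2} for a constant C depending only on β and λ (combining the analogous estimate on [δ,∞) using β′ > 2). -/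
/-!
Write `ψ t = e^{-λt} φ(t)`, so that `0 ≤ ψ ≤ S` (as `λ ≥ 0`) and `I = ∫₀^∞ ψ`. Near the origin,
Hölder's inequality with exponents `β, β'` applied to
`t^{-1/2} ψ = (t^{-β/2} ψ)^{1/β} ψ^{1/β'}` bounds `∫₀^δ t^{-1/2} ψ` by
`(S ∫₀^δ t^{-β/2})^{1/β} I^{1/β'}`, which is finite because `β/2 < 1`. Away from the origin,
`∫_δ^∞ t^{-1/2} ψ ≤ δ^{-1/2} I`. The choice `δ = I/S` balances the two bounds, each of which then
equals a constant times `I^{1/2} S^{1/2}`. Everything works for a general exponent `a` in place of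
`1/2`, provided `0 ≤ a` and `a β < 1`.
-/

open Set MeasureTheory Real

section

variable {α : Type*} [MeasurableSpace α] {μ : Measure α}

theorem integral_rpow_mul_rpow_le_of_nonneg {f g : α → ℝ} {p q : ℝ} (hp : 0 ≤ p) (hq : 0 ≤ q)
    (hpq : p + q = 1) (hf0 : 0 ≤ᵐ[μ] f) (hg0 : 0 ≤ᵐ[μ] g) (hf : Integrable f μ)
    (hg : Integrable g μ) :
    ∫ a, f a ^ p * g a ^ q ∂μ ≤ (∫ a, f a ∂μ) ^ p * (∫ a, g a ∂μ) ^ q := by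
  have hfg0 : 0 ≤ᵐ[μ] fun a => f a ^ p * g a ^ q := by
    filter_upwards [hf0, hg0] with a hfa hga
    exact mul_nonneg (rpow_nonneg hfa p) (rpow_nonneg hga q)
  have hofReal : (fun a => ENNReal.ofReal (f a ^ p * g a ^ q)) =ᵐ[μ]
      fun a => ENNReal.ofReal (f a) ^ p * ENNReal.ofReal (g a) ^ q := by
    filter_upwards [hf0, hg0] with a hfa hga
    rw [ENNReal.ofReal_mul (rpow_nonneg hfa p), ENNReal.ofReal_rpow_of_nonneg hfa hp,
      ENNReal.ofReal_rpow_of_nonneg hga hq]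
  rw [integral_eq_lintegral_of_nonneg_ae hfg0
      ((hf.1.aemeasurable.pow_const p).mul (hg.1.aemeasurable.pow_const q)).aestronglyMeasurable,
    integral_eq_lintegral_of_nonneg_ae hf0 hf.1, integral_eq_lintegral_of_nonneg_ae hg0 hg.1,
    ENNReal.toReal_rpow, ENNReal.toReal_rpow, ← ENNReal.toReal_mul, lintegral_congr_ae hofReal]
  refine ENNReal.toReal_mono ?_ (ENNReal.lintegral_mul_norm_pow_le
    hf.1.aemeasurable.ennreal_ofReal hg.1.aemeasurable.ennreal_ofReal hp hq hpq)
  exact ENNReal.mul_ne_top (ENNReal.rpow_ne_top_of_nonneg hp hf.lintegral_lt_top.ne)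
    (ENNReal.rpow_ne_top_of_nonneg hq hg.lintegral_lt_top.ne)

theorem setIntegral_union_le_add_of_nonneg {f : α → ℝ} {s t : Set α} (hst : Disjoint s t)
    (ht : MeasurableSet t) (hfs : 0 ≤ᵐ[μ.restrict s] f) (hft : 0 ≤ᵐ[μ.restrict t] f) :
    ∫ x in s ∪ t, f x ∂μ ≤ (∫ x in s, f x ∂μ) + ∫ x in t, f x ∂μ := by
  by_cases hf : IntegrableOn f (s ∪ t) μ
  · exact (setIntegral_union hst ht hf.left_of_union hf.right_of_union).le
  · rw [integral_undef hf]
    exact add_nonneg (integral_nonneg_of_ae hfs) (integral_nonneg_of_ae hft)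

end

theorem integrableOn_Ioc_rpow_neg {c δ : ℝ} (hc : c < 1) :
    IntegrableOn (fun t : ℝ => t ^ (-c)) (Ioc 0 δ) := by
  rcases le_or_gt δ 0 with hδ | hδ
  · simp [Ioc_eq_empty_of_le hδ]
  exact (intervalIntegrable_iff_integrableOn_Ioc_of_le hδ.le).mp
    (intervalIntegral.intervalIntegrable_rpow' (by linarith))

theorem integral_Ioc_rpow_neg {c δ : ℝ} (hc : c < 1) (hδ : 0 ≤ δ) :
    ∫ t in Ioc 0 δ, t ^ (-c) = δ ^ (1 - c) / (1 - c) := by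
  rw [← intervalIntegral.integral_of_le hδ, integral_rpow (Or.inl (by linarith)),
    zero_rpow (by linarith), sub_zero, neg_add_eq_sub]

section

variable {ψ : ℝ → ℝ} {S : ℝ}

theorem integrableOn_Ioc_mul_rpow_neg (hψ0 : ∀ t, 0 < t → 0 ≤ ψ t)
    (hψS : ∀ t, 0 < t → ψ t ≤ S) (hψ : IntegrableOn ψ (Ioi 0)) {c : ℝ} (hc : c < 1) (δ : ℝ) :
    IntegrableOn (fun t => ψ t * t ^ (-c)) (Ioc 0 δ) := by
  refine ((integrableOn_Ioc_rpow_neg hc).const_mul S).mono'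
    ((hψ.mono_set Ioc_subset_Ioi_self).1.mul (by fun_prop)) ?_
  refine ae_restrict_of_forall_mem measurableSet_Ioc fun t ht => ?_
  have ht0 := rpow_nonneg ht.1.le (-c)
  rw [norm_of_nonneg (mul_nonneg (hψ0 t ht.1) ht0)]
  exact mul_le_mul_of_nonneg_right (hψS t ht.1) ht0

theorem setIntegral_Ioc_mul_rpow_neg_le (hψ0 : ∀ t, 0 < t → 0 ≤ ψ t)
    (hψS : ∀ t, 0 < t → ψ t ≤ S) {c δ : ℝ} (hc : c < 1) (hδ : 0 ≤ δ) :
    ∫ t in Ioc 0 δ, ψ t * t ^ (-c) ≤ S * (δ ^ (1 - c) / (1 - c)) := by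
  rw [← integral_Ioc_rpow_neg hc hδ, ← integral_const_mul]
  refine integral_mono_of_nonneg ?_ ((integrableOn_Ioc_rpow_neg hc).const_mul S) ?_
  · refine ae_restrict_of_forall_mem measurableSet_Ioc fun t ht => ?_
    exact mul_nonneg (hψ0 t ht.1) (rpow_nonneg ht.1.le _)
  · refine ae_restrict_of_forall_mem measurableSet_Ioc fun t ht => ?_
    exact mul_le_mul_of_nonneg_right (hψS t ht.1) (rpow_nonneg ht.1.le _)

theorem setIntegral_Ioi_mul_rpow_neg_le (hψ0 : ∀ t, 0 < t → 0 ≤ ψ t)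
    (hψ : IntegrableOn ψ (Ioi 0)) {a δ : ℝ} (ha : 0 ≤ a) (hδ : 0 < δ) :
    ∫ t in Ioi δ, ψ t * t ^ (-a) ≤ δ ^ (-a) * ∫ t in Ioi 0, ψ t := by
  have hsub : Ioi δ ⊆ Ioi 0 := Ioi_subset_Ioi hδ.le
  calc ∫ t in Ioi δ, ψ t * t ^ (-a)
      ≤ ∫ t in Ioi δ, ψ t * δ ^ (-a) := by
        refine integral_mono_of_nonneg ?_ ((hψ.mono_set hsub).mul_const _) ?_
        · refine ae_restrict_of_forall_mem measurableSet_Ioi fun t ht => ?_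
          exact mul_nonneg (hψ0 t (hsub ht)) (rpow_nonneg (hδ.trans ht).le _)
        · refine ae_restrict_of_forall_mem measurableSet_Ioi fun t ht => ?_
          exact mul_le_mul_of_nonneg_left
            (rpow_le_rpow_of_nonpos hδ ht.le (neg_nonpos.2 ha)) (hψ0 t (hsub ht))
    _ ≤ δ ^ (-a) * ∫ t in Ioi 0, ψ t := by
        rw [integral_mul_const, mul_comm]
        exact mul_le_mul_of_nonneg_left
          (setIntegral_mono_set hψ
            (ae_restrict_of_forall_mem measurableSet_Ioi hψ0) hsub.eventuallyLE)
          (rpow_nonneg hδ.le _)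

theorem setIntegral_Ioc_mul_rpow_neg_le_holder (hψ0 : ∀ t, 0 < t → 0 ≤ ψ t)
    (hψS : ∀ t, 0 < t → ψ t ≤ S) (hψ : IntegrableOn ψ (Ioi 0)) {a β β' δ : ℝ} (hβ : 1 ≤ β)
    (hconj : 1 / β + 1 / β' = 1) (haβ : a * β < 1) (hδ : 0 ≤ δ) :
    ∫ t in Ioc 0 δ, ψ t * t ^ (-a) ≤
      δ ^ (1 / β - a) / (1 - a * β) ^ (1 / β) * S ^ (1 / β) * (∫ t in Ioi 0, ψ t) ^ (1 / β') := by
  have hβ0 : 0 < β := by linarith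
  have hp : 0 ≤ 1 / β := by positivity
  have hq : 0 ≤ 1 / β' := by
    have : 1 / β ≤ 1 := (div_le_one hβ0).2 hβ
    linarith
  have hS0 : 0 ≤ S := (hψ0 1 one_pos).trans (hψS 1 one_pos)
  have hsplit : ∀ t ∈ Ioc (0 : ℝ) δ,
      ψ t * t ^ (-a) = (ψ t * t ^ (-(a * β))) ^ (1 / β) * ψ t ^ (1 / β') := by
    intro t ht
    have hψt := hψ0 t ht.1
    rw [mul_rpow hψt (rpow_nonneg ht.1.le _), ← rpow_mul ht.1.le, mul_right_comm,
      ← rpow_add' hψt (by rw [hconj]; exact one_ne_zero), hconj, rpow_one]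
    congr 2
    field_simp
  have hΨ : IntegrableOn ψ (Ioc 0 δ) := hψ.mono_set Ioc_subset_Ioi_self
  calc ∫ t in Ioc 0 δ, ψ t * t ^ (-a)
      = ∫ t in Ioc 0 δ, (ψ t * t ^ (-(a * β))) ^ (1 / β) * ψ t ^ (1 / β') :=
        setIntegral_congr_fun measurableSet_Ioc hsplit
    _ ≤ (∫ t in Ioc 0 δ, ψ t * t ^ (-(a * β))) ^ (1 / β) * (∫ t in Ioc 0 δ, ψ t) ^ (1 / β') := by
        refine integral_rpow_mul_rpow_le_of_nonneg hp hq hconj ?_ ?_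
          (integrableOn_Ioc_mul_rpow_neg hψ0 hψS hψ haβ δ) hΨ
        · exact ae_restrict_of_forall_mem measurableSet_Ioc fun t ht =>
            mul_nonneg (hψ0 t ht.1) (rpow_nonneg ht.1.le _)
        · exact ae_restrict_of_forall_mem measurableSet_Ioc fun t ht => hψ0 t ht.1
    _ ≤ (S * (δ ^ (1 - a * β) / (1 - a * β))) ^ (1 / β) * (∫ t in Ioi 0, ψ t) ^ (1 / β') := by
        have hA0 : 0 ≤ ∫ t in Ioc 0 δ, ψ t * t ^ (-(a * β)) :=
          setIntegral_nonneg measurableSet_Ioc fun t ht =>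
            mul_nonneg (hψ0 t ht.1) (rpow_nonneg ht.1.le _)
        have hB0 : 0 ≤ ∫ t in Ioc 0 δ, ψ t :=
          setIntegral_nonneg measurableSet_Ioc fun t ht => hψ0 t ht.1
        have hA := setIntegral_Ioc_mul_rpow_neg_le hψ0 hψS haβ hδ
        have hB : ∫ t in Ioc 0 δ, ψ t ≤ ∫ t in Ioi 0, ψ t :=
          setIntegral_mono_set hψ (ae_restrict_of_forall_mem measurableSet_Ioi hψ0)
            Ioc_subset_Ioi_self.eventuallyLE
        exact mul_le_mul (rpow_le_rpow hA0 hA hp) (rpow_le_rpow hB0 hB hq)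
          (rpow_nonneg hB0 _) (rpow_nonneg (hA0.trans hA) _)
    _ = δ ^ (1 / β - a) / (1 - a * β) ^ (1 / β) * S ^ (1 / β) * (∫ t in Ioi 0, ψ t) ^ (1 / β') := by
        have hc : 0 ≤ 1 - a * β := by linarith
        rw [mul_rpow hS0 (div_nonneg (rpow_nonneg hδ _) hc), div_rpow (rpow_nonneg hδ _) hc,
          ← rpow_mul hδ, show (1 - a * β) * (1 / β) = 1 / β - a by field_simp]
        ring

theorem setIntegral_Ioi_mul_rpow_neg_le_rpow_mul_rpow (hψ0 : ∀ t, 0 < t → 0 ≤ ψ t)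
    (hψS : ∀ t, 0 < t → ψ t ≤ S) (hψ : IntegrableOn ψ (Ioi 0)) {a β β' : ℝ} (hβ : 1 ≤ β)
    (hconj : 1 / β + 1 / β' = 1) (ha : 0 ≤ a) (haβ : a * β < 1) :
    ∫ t in Ioi 0, ψ t * t ^ (-a) ≤
      (1 / (1 - a * β) ^ (1 / β) + 1) * (∫ t in Ioi 0, ψ t) ^ (1 - a) * S ^ a := by
  set I := ∫ t in Ioi 0, ψ t
  have hI0 : 0 ≤ I := setIntegral_nonneg measurableSet_Ioi hψ0
  rcases hI0.eq_or_lt with hI | hI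
  · have hψ_ae : ψ =ᵐ[volume.restrict (Ioi 0)] 0 :=
      (integral_eq_zero_iff_of_nonneg_ae
        (ae_restrict_of_forall_mem measurableSet_Ioi hψ0) hψ).1 hI.symm
    rw [integral_eq_zero_of_ae (by filter_upwards [hψ_ae] with t ht; simp [ht])]
    have hc : 0 < 1 - a * β := by linarith
    have hS0 : 0 ≤ S := (hψ0 1 one_pos).trans (hψS 1 one_pos)
    positivity
  have hS : 0 < S := by
    by_contra! hS
    exact hI.not_ge (setIntegral_nonpos measurableSet_Ioi fun t ht => (hψS t ht).trans hS)
  set δ := I / S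
  have hδ : 0 < δ := div_pos hI hS
  have hδS : ∀ x : ℝ, δ ^ x * S ^ x = I ^ x := fun x => by
    rw [← mul_rpow hδ.le hS.le, div_mul_cancel₀ _ hS.ne']
  have hhead : δ ^ (1 / β - a) * S ^ (1 / β) * I ^ (1 / β') = I ^ (1 - a) * S ^ a := by
    rw [show S ^ (1 / β) = S ^ (1 / β - a) * S ^ a by rw [← rpow_add hS, sub_add_cancel],
      ← mul_assoc, hδS, mul_right_comm, ← rpow_add hI]
    congr 2
    linarith
  have htail : δ ^ (-a) * I = I ^ (1 - a) * S ^ a := by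
    conv_lhs => rw [show I = I ^ (1 - a) * (δ ^ a * S ^ a) by
      rw [hδS, ← rpow_add hI, sub_add_cancel, rpow_one]]
    rw [rpow_neg hδ.le]
    field_simp
  have hnonneg : 0 ≤ᵐ[volume.restrict (Ioi 0)] fun t => ψ t * t ^ (-a) :=
    ae_restrict_of_forall_mem measurableSet_Ioi fun t ht =>
      mul_nonneg (hψ0 t ht) (rpow_nonneg ht.le _)
  calc ∫ t in Ioi 0, ψ t * t ^ (-a)
      = ∫ t in Ioc 0 δ ∪ Ioi δ, ψ t * t ^ (-a) := by rw [Ioc_union_Ioi_eq_Ioi hδ.le]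
    _ ≤ (∫ t in Ioc 0 δ, ψ t * t ^ (-a)) + ∫ t in Ioi δ, ψ t * t ^ (-a) :=
        setIntegral_union_le_add_of_nonneg Ioc_disjoint_Ioi_same measurableSet_Ioi
          (ae_restrict_of_ae_restrict_of_subset Ioc_subset_Ioi_self hnonneg)
          (ae_restrict_of_ae_restrict_of_subset (Ioi_subset_Ioi hδ.le) hnonneg)
    _ ≤ δ ^ (1 / β - a) / (1 - a * β) ^ (1 / β) * S ^ (1 / β) * I ^ (1 / β') + δ ^ (-a) * I :=
        add_le_add (setIntegral_Ioc_mul_rpow_neg_le_holder hψ0 hψS hψ hβ hconj haβ hδ.le)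
          (setIntegral_Ioi_mul_rpow_neg_le hψ0 hψ ha hδ)
    _ = (1 / (1 - a * β) ^ (1 / β) + 1) * I ^ (1 - a) * S ^ a := by
        rw [div_mul_eq_mul_div, div_mul_eq_mul_div, hhead, htail]
        ring

end

/-- Hedberg-type splitting lemma. For `1 < β < 2` with conjugate `β'`,
`λ > 0`, and a nonnegative measurable `φ` on `(0,∞)` with supremum bound `S` and
`I = ∫₀^∞ e^{-λ t} φ(t) dt`, Hölder's inequality gives for every `δ > 0`
`∫₀^δ e^{-λ t} t^{-1/2} φ(t) dt ≤ δ^{1/β - 1/2} / (1-β/2)^{1/β} · S^{1/β} · I^{1/β'}`;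
consequently (choosing `δ = I/S` and treating `[δ,∞)` symmetrically with `β' > 2`)
there is a constant `C`, depending only on `β` and `λ`, with
`∫₀^∞ e^{-λ t} t^{-1/2} φ(t) dt ≤ C · I^{1/2} · S^{1/2}`. -/
theorem stmt6 (β β' lam : ℝ) (hβ1 : 1 < β) (hβ2 : β < 2)
    (hconj : 1 / β + 1 / β' = 1) (hlam : 0 < lam) :
    (∀ φ : ℝ → ℝ, Measurable φ → (∀ t, 0 < t → 0 ≤ φ t) →
      ∀ S I : ℝ, (∀ t, 0 < t → φ t ≤ S) →
        I = ∫ t in Set.Ioi (0:ℝ), Real.exp (-lam * t) * φ t →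
        IntegrableOn (fun t => Real.exp (-lam * t) * φ t) (Set.Ioi 0) →
        ∀ δ : ℝ, 0 < δ →
          ∫ t in Set.Ioc (0:ℝ) δ, Real.exp (-lam * t) * t ^ (-(1:ℝ)/2) * φ t ≤
            δ ^ (1/β - 1/2) / (1 - β/2) ^ (1/β) * S ^ (1/β) * I ^ (1/β')) ∧
    (∃ C : ℝ, 0 < C ∧
      ∀ φ : ℝ → ℝ, Measurable φ → (∀ t, 0 < t → 0 ≤ φ t) →
        ∀ S I : ℝ, (∀ t, 0 < t → φ t ≤ S) →
          I = ∫ t in Set.Ioi (0:ℝ), Real.exp (-lam * t) * φ t →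
          IntegrableOn (fun t => Real.exp (-lam * t) * φ t) (Set.Ioi 0) →
          ∫ t in Set.Ioi (0:ℝ), Real.exp (-lam * t) * t ^ (-(1:ℝ)/2) * φ t ≤
            C * I ^ ((1:ℝ)/2) * S ^ ((1:ℝ)/2)) := by
  have hβ : 1 / 2 * β < 1 := by linarith
  have hweight_nonneg (φ : ℝ → ℝ) (hφ0 : ∀ t, 0 < t → 0 ≤ φ t) (t : ℝ) (ht : 0 < t) :
      0 ≤ rexp (-lam * t) * φ t :=
    mul_nonneg (exp_pos _).le (hφ0 t ht)
  have hweight_le (φ : ℝ → ℝ) (hφ0 : ∀ t, 0 < t → 0 ≤ φ t) (S : ℝ)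
      (hS : ∀ t, 0 < t → φ t ≤ S) (t : ℝ) (ht : 0 < t) : rexp (-lam * t) * φ t ≤ S :=
    (mul_le_of_le_one_left (hφ0 t ht) (exp_le_one_iff.2 (by nlinarith))).trans (hS t ht)
  have hintegrand (φ : ℝ → ℝ) : (fun t => rexp (-lam * t) * t ^ (-(1:ℝ)/2) * φ t) =
      fun t => rexp (-lam * t) * φ t * t ^ (-(1 / 2 : ℝ)) := by
    ext t
    rw [neg_div, mul_right_comm]
  refine ⟨fun φ _ hφ0 S I hS hI hint δ hδ => ?_,
    1 / (1 - β / 2) ^ (1 / β) + 1, ?_, fun φ _ hφ0 S I hS hI hint => ?_⟩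
  · rw [hintegrand, hI, ← one_div_mul_eq_div 2 β]
    exact setIntegral_Ioc_mul_rpow_neg_le_holder (hweight_nonneg φ hφ0) (hweight_le φ hφ0 S hS)
      hint hβ1.le hconj hβ hδ.le
  · have : 0 < 1 - β / 2 := by linarith
    positivity
  · have h := setIntegral_Ioi_mul_rpow_neg_le_rpow_mul_rpow (hweight_nonneg φ hφ0)
      (hweight_le φ hφ0 S hS) hint hβ1.le hconj (by norm_num) hβ
    rw [one_div_mul_eq_div, show (1 : ℝ) - 1 / 2 = 1 / 2 by norm_num] at h
    rwa [hintegrand, hI]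
end

section
/- Suppose d > 4, the resolvent density satisfies g_λ(x,y) ≤ c₆ ϱ(x,y)^{2−d} for all x,y ∈ M, and μ(B(x,r)) ≤ c₇ r^d for all x ∈ M, r > 0. Then for all x, z ∈ M: ∫_M ϱ(x,y)^{2−d} ϱ(y,z)^{2−d} dμ(y) ≤ C ϱ(x,z)^{4−d} with C depending only on c₇ and d; consequently ‖G_λ ν‖²_{L²(M)} ≤ C′ ∬ ϱ(x,z)^{4−d} dν(z) dν(x) for every nonnegative Radon measure ν. -/
/-!
With `a = 2 - d`, split `∫ ϱ(x,y)^a ϱ(y,z)^a dμ(y)` along the half-space `ϱ(x,y) ≤ ϱ(y,z)` and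
its mirror image. With `R = ϱ(x,z)`, on that half-space `ϱ(y,z) ≥ R/2` inside `B(x,R)` and
`ϱ(y,z) ≥ ϱ(x,y)` outside, so everything reduces to integrals of powers of `ϱ(x,·)` over a ball or
its complement. Summing the volume bound over dyadic annuli gives `R^(a+d)` inside (as `a + d > 0`)
and `R^(2a+d)` outside (as `2a + d < 0`), in total `R^(4-d)`.

For the `L²` bound expand the square and apply Tonelli, which reduces it to the convolution
estimate. Tonelli needs a jointly measurable kernel: when the right-hand side is finite, `ν` is
σ-finite, so by inner regularity it is carried by a σ-compact, hence separable, set, and on such a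
set `ϱ` agrees with a measurable kernel built from a countable dense subset.
-/

open Set MeasureTheory ENNReal Metric

theorem ENNReal.rpow_le_rpow_of_nonpos {a b : ℝ≥0∞} {c : ℝ} (hab : a ≤ b) (hc : c ≤ 0) :
    b ^ c ≤ a ^ c := by
  rw [← neg_neg c, ENNReal.rpow_neg b, ENNReal.rpow_neg a]
  exact ENNReal.inv_le_inv.mpr (ENNReal.rpow_le_rpow hab (neg_nonneg.mpr hc))

theorem ENNReal.tsum_ofReal_mul_pow {K q : ℝ} (hq₀ : 0 ≤ q) (hq₁ : q < 1) :
    ∑' n : ℕ, ENNReal.ofReal (K * q ^ n) = ENNReal.ofReal (K * (1 - q)⁻¹) := by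
  have hq : (1 : ℝ≥0∞) - ENNReal.ofReal q = ENNReal.ofReal (1 - q) := by
    rw [ENNReal.ofReal_sub 1 hq₀, ENNReal.ofReal_one]
  simp_rw [ENNReal.ofReal_mul' (pow_nonneg hq₀ _), ENNReal.ofReal_pow hq₀]
  rw [ENNReal.tsum_mul_left, ENNReal.tsum_geometric, hq,
    ← ENNReal.ofReal_inv_of_pos (by linarith), ENNReal.ofReal_mul' (inv_nonneg.mpr (by linarith))]

section Annuli

variable {M : Type*} [MetricSpace M]

theorem ball_subset_insert_iUnion_annulus (x : M) {R : ℝ} (hR : 0 < R) :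
    ball x R ⊆ insert x (⋃ n : ℕ,
      ball x (2 * (R / 2 * 2⁻¹ ^ n)) \ ball x (R / 2 * 2⁻¹ ^ n)) := by
  intro y hy
  rcases eq_or_ne y x with rfl | hyx
  · exact mem_insert y _
  have hρ : 0 < dist y x := dist_pos.mpr hyx
  obtain ⟨k, hk₁, hk₂⟩ := exists_mem_Ioc_zpow (div_pos hR hρ) (by norm_num : (1 : ℝ) < 2)
  have hk : 0 ≤ k := by
    have h : (1 : ℝ) < 2 ^ (k + 1) := ((one_lt_div hρ).mpr (mem_ball.mp hy)).trans_le hk₂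
    have := (one_lt_zpow_iff_right₀ (by norm_num)).mp h
    omega
  lift k to ℕ using hk
  have hs : R / 2 * 2⁻¹ ^ k = R / 2 ^ (k + 1) := by
    rw [pow_succ, inv_pow]; field_simp
  rw [zpow_natCast] at hk₁
  rw [show ((k : ℤ) + 1) = ((k + 1 : ℕ) : ℤ) by push_cast; ring, zpow_natCast] at hk₂
  refine mem_insert_of_mem _ (mem_iUnion.mpr ⟨k, ?_, ?_⟩) <;> rw [hs]
  · rw [mem_ball, pow_succ, ← div_div, mul_div_cancel₀ _ two_ne_zero]
    rwa [lt_div_iff₀ hρ, mul_comm, ← lt_div_iff₀ (by positivity)] at hk₁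
  · rw [mem_ball, not_lt]
    rwa [div_le_iff₀ hρ, mul_comm, ← div_le_iff₀ (by positivity)] at hk₂

theorem compl_ball_subset_iUnion_annulus (x : M) {R : ℝ} (hR : 0 < R) :
    (ball x R)ᶜ ⊆ ⋃ n : ℕ, ball x (2 * (R * 2 ^ n)) \ ball x (R * 2 ^ n) := by
  intro y hy
  rw [mem_compl_iff, mem_ball, not_lt] at hy
  obtain ⟨n, hn₁, hn₂⟩ := exists_nat_pow_near ((one_le_div hR).mpr hy) (by norm_num : (1 : ℝ) < 2)
  refine mem_iUnion.mpr ⟨n, ?_, ?_⟩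
  · rw [mem_ball, ← mul_assoc, mul_comm 2 R, mul_assoc, ← pow_succ']
    rwa [div_lt_iff₀ hR, mul_comm] at hn₂
  · rw [mem_ball, not_lt]
    rwa [le_div_iff₀ hR, mul_comm] at hn₁

end Annuli

def UpperAhlforsRegular {M : Type*} [PseudoMetricSpace M] [MeasurableSpace M]
    (μ : Measure M) (C d : ℝ) : Prop :=
  ∀ (x : M) (r : ℝ), 0 < r → μ (ball x r) ≤ ENNReal.ofReal (C * r ^ d)

namespace UpperAhlforsRegular

variable {M : Type*} [MetricSpace M] [MeasurableSpace M] {μ : Measure M} {C d : ℝ}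

theorem measure_singleton (h : UpperAhlforsRegular μ C d) (hd : 0 < d) (x : M) :
    μ {x} = 0 := by
  have hlim : Filter.Tendsto (fun r : ℝ => ENNReal.ofReal (C * r ^ d))
      (nhdsWithin 0 (Ioi 0)) (nhds 0) := by
    have hcont : ContinuousAt (fun r : ℝ => ENNReal.ofReal (C * r ^ d)) 0 :=
      ENNReal.continuous_ofReal.continuousAt.comp
        ((Real.continuousAt_rpow_const 0 d (Or.inr hd.le)).const_mul C)
    simpa [Real.zero_rpow hd.ne'] using hcont.tendsto.mono_left nhdsWithin_le_nhds
  refine nonpos_iff_eq_zero.mp (ge_of_tendsto hlim ?_)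
  filter_upwards [self_mem_nhdsWithin] with r hr
  exact (measure_mono (singleton_subset_iff.mpr (mem_ball_self hr))).trans (h x r hr)

theorem setLIntegral_annulus_le (h : UpperAhlforsRegular μ C d) (x : M) {s a : ℝ}
    (hs : 0 < s) (ha : a ≤ 0) :
    ∫⁻ y in ball x (2 * s) \ ball x s, edist x y ^ a ∂μ ≤
      ENNReal.ofReal (C * 2 ^ d * s ^ (a + d)) := by
  have hbound : ∀ y ∈ ball x (2 * s) \ ball x s, edist x y ^ a ≤ ENNReal.ofReal (s ^ a) := by
    rintro y ⟨-, hy⟩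
    rw [mem_ball, not_lt, dist_comm] at hy
    rw [← ENNReal.ofReal_rpow_of_pos hs, edist_dist]
    exact ENNReal.rpow_le_rpow_of_nonpos (ENNReal.ofReal_le_ofReal hy) ha
  calc ∫⁻ y in ball x (2 * s) \ ball x s, edist x y ^ a ∂μ
      ≤ ∫⁻ _ in ball x (2 * s) \ ball x s, ENNReal.ofReal (s ^ a) ∂μ :=
        setLIntegral_mono measurable_const hbound
    _ = ENNReal.ofReal (s ^ a) * μ (ball x (2 * s) \ ball x s) := setLIntegral_const _ _
    _ ≤ ENNReal.ofReal (s ^ a) * ENNReal.ofReal (C * (2 * s) ^ d) :=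
        mul_le_mul_right ((measure_mono sdiff_subset).trans (h x _ (by positivity))) _
    _ = ENNReal.ofReal (C * 2 ^ d * s ^ (a + d)) := by
        rw [← ENNReal.ofReal_mul (by positivity), Real.mul_rpow two_pos.le hs.le,
          Real.rpow_add hs]
        ring_nf

theorem setLIntegral_iUnion_annulus_le (h : UpperAhlforsRegular μ C d) (x : M) {s t a : ℝ}
    (hs : 0 < s) (ht : 0 < t) (ha : a ≤ 0) (hq : t ^ (a + d) < 1) :
    ∫⁻ y in ⋃ n : ℕ, ball x (2 * (s * t ^ n)) \ ball x (s * t ^ n), edist x y ^ a ∂μ ≤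
      ENNReal.ofReal (C * 2 ^ d * s ^ (a + d) * (1 - t ^ (a + d))⁻¹) := by
  have hterm : ∀ n : ℕ, (s * t ^ n) ^ (a + d) = s ^ (a + d) * (t ^ (a + d)) ^ n := by
    intro n
    rw [Real.mul_rpow hs.le (by positivity), ← Real.rpow_natCast_mul ht.le, mul_comm (n : ℝ),
      Real.rpow_mul_natCast ht.le]
  calc ∫⁻ y in ⋃ n : ℕ, ball x (2 * (s * t ^ n)) \ ball x (s * t ^ n), edist x y ^ a ∂μ
      ≤ ∑' n : ℕ, ∫⁻ y in ball x (2 * (s * t ^ n)) \ ball x (s * t ^ n), edist x y ^ a ∂μ :=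
        lintegral_iUnion_le _ _
    _ ≤ ∑' n : ℕ, ENNReal.ofReal (C * 2 ^ d * s ^ (a + d) * (t ^ (a + d)) ^ n) := by
        refine ENNReal.tsum_le_tsum fun n => ?_
        rw [mul_assoc _ (s ^ (a + d)), ← hterm]
        exact h.setLIntegral_annulus_le x (by positivity) ha
    _ = _ := ENNReal.tsum_ofReal_mul_pow (by positivity) hq

theorem setLIntegral_ball_le (h : UpperAhlforsRegular μ C d) (x : M) {R a : ℝ}
    (hR : 0 < R) (ha : a ≤ 0) (had : 0 < a + d) :
    ∫⁻ y in ball x R, edist x y ^ a ∂μ ≤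
      ENNReal.ofReal (C * 2 ^ d * (R / 2) ^ (a + d) * (1 - 2⁻¹ ^ (a + d))⁻¹) := by
  calc ∫⁻ y in ball x R, edist x y ^ a ∂μ
      ≤ ∫⁻ y in insert x (⋃ n : ℕ, ball x (2 * (R / 2 * 2⁻¹ ^ n)) \ ball x (R / 2 * 2⁻¹ ^ n)),
          edist x y ^ a ∂μ := lintegral_mono_set (ball_subset_insert_iUnion_annulus x hR)
    _ = ∫⁻ y in ⋃ n : ℕ, ball x (2 * (R / 2 * 2⁻¹ ^ n)) \ ball x (R / 2 * 2⁻¹ ^ n),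
          edist x y ^ a ∂μ :=
        setLIntegral_congr <| by
          rw [insert_eq]
          exact union_ae_eq_right_of_ae_eq_empty
            (ae_eq_empty.mpr (h.measure_singleton (by linarith) x))
    _ ≤ _ := h.setLIntegral_iUnion_annulus_le x (by positivity) (by norm_num) ha
          (Real.rpow_lt_one (by norm_num) (by norm_num) had)

theorem setLIntegral_compl_ball_le (h : UpperAhlforsRegular μ C d) (x : M) {R a : ℝ}
    (hR : 0 < R) (ha : a ≤ 0) (had : a + d < 0) :
    ∫⁻ y in (ball x R)ᶜ, edist x y ^ a ∂μ ≤
      ENNReal.ofReal (C * 2 ^ d * R ^ (a + d) * (1 - 2 ^ (a + d))⁻¹) :=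
  (lintegral_mono_set (compl_ball_subset_iUnion_annulus x hR)).trans
    (h.setLIntegral_iUnion_annulus_le x hR two_pos ha
      (Real.rpow_lt_one_of_one_lt_of_neg (by norm_num) had))

end UpperAhlforsRegular

section Convolution

variable {M : Type*} [MetricSpace M]

noncomputable def nearFarMajorant (x : M) (R a : ℝ) (y : M) : ℝ≥0∞ :=
  (ball x R).indicator (fun y => ENNReal.ofReal ((R / 2) ^ a) * edist x y ^ a) y +
    (ball x R)ᶜ.indicator (fun y => edist x y ^ (2 * a)) y

theorem rpow_edist_mul_rpow_edist_le_nearFarMajorant (x y z : M) {a : ℝ} (ha : a ≤ 0)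
    (hxy : edist x y ≤ edist y z) :
    edist x y ^ a * edist y z ^ a ≤ nearFarMajorant x (dist x z) a y := by
  by_cases hy : y ∈ ball x (dist x z)
  · rw [nearFarMajorant, indicator_of_mem hy, indicator_of_notMem (notMem_compl_iff.mpr hy),
      add_zero, mul_comm]
    rw [mem_ball, dist_comm] at hy
    rw [edist_dist, edist_dist, ENNReal.ofReal_le_ofReal_iff dist_nonneg] at hxy
    have hR : dist x z / 2 ≤ dist y z := by linarith [dist_triangle x y z]
    gcongr
    rw [← ENNReal.ofReal_rpow_of_pos (by linarith [dist_nonneg (x := x) (y := y)]), edist_dist]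
    exact ENNReal.rpow_le_rpow_of_nonpos (ENNReal.ofReal_le_ofReal hR) ha
  · rw [nearFarMajorant, indicator_of_notMem hy, indicator_of_mem (mem_compl hy), zero_add,
      mul_comm 2 a, ENNReal.rpow_mul, ENNReal.rpow_two, sq]
    exact mul_le_mul' le_rfl (ENNReal.rpow_le_rpow_of_nonpos hxy ha)

variable [MeasurableSpace M] [OpensMeasurableSpace M] {μ : Measure M} {C d : ℝ}

theorem UpperAhlforsRegular.lintegral_nearFarMajorant_le
    (h : UpperAhlforsRegular μ C d) (hC : 0 ≤ C) (x : M) {R a : ℝ} (hR : 0 < R) (ha : -d < a)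
    (had : 2 * a + d < 0) :
    ∫⁻ y, nearFarMajorant x R a y ∂μ ≤
      ENNReal.ofReal (C * 2 ^ d * ((1 - 2⁻¹ ^ (a + d))⁻¹ / 2 ^ (2 * a + d) +
        (1 - 2 ^ (2 * a + d))⁻¹) * R ^ (2 * a + d)) := by
  have hmeas : Measurable fun y => edist x y ^ a := measurable_edist_right.pow_const a
  simp only [nearFarMajorant]
  rw [lintegral_add_left ((hmeas.const_mul _).indicator measurableSet_ball),
    lintegral_indicator measurableSet_ball, lintegral_indicator measurableSet_ball.compl,
    lintegral_const_mul' _ _ ENNReal.ofReal_ne_top]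
  calc ENNReal.ofReal ((R / 2) ^ a) * ∫⁻ y in ball x R, edist x y ^ a ∂μ +
        ∫⁻ y in (ball x R)ᶜ, edist x y ^ (2 * a) ∂μ
      ≤ ENNReal.ofReal ((R / 2) ^ a) *
          ENNReal.ofReal (C * 2 ^ d * (R / 2) ^ (a + d) * (1 - 2⁻¹ ^ (a + d))⁻¹) +
        ENNReal.ofReal (C * 2 ^ d * R ^ (2 * a + d) * (1 - 2 ^ (2 * a + d))⁻¹) := by
        gcongr
        · exact h.setLIntegral_ball_le x hR (by linarith) (by linarith)
        · exact h.setLIntegral_compl_ball_le x hR (by linarith) had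
    _ = _ := by
        have hA : 0 ≤ (1 - (2⁻¹ : ℝ) ^ (a + d))⁻¹ := inv_nonneg.mpr <|
          sub_nonneg.mpr (Real.rpow_le_one (by norm_num) (by norm_num) (by linarith))
        have hB : 0 ≤ (1 - (2 : ℝ) ^ (2 * a + d))⁻¹ := inv_nonneg.mpr <|
          sub_nonneg.mpr (Real.rpow_le_one_of_one_le_of_nonpos (by norm_num) had.le)
        have hpow : (R / 2) ^ a * (R / 2) ^ (a + d) = R ^ (2 * a + d) / 2 ^ (2 * a + d) := by
          rw [← Real.rpow_add (by positivity), ← Real.div_rpow hR.le two_pos.le]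
          ring_nf
        rw [← ENNReal.ofReal_mul (by positivity),
          ← ENNReal.ofReal_add (by positivity) (by positivity)]
        congr 1
        linear_combination (C * 2 ^ d * (1 - (2⁻¹ : ℝ) ^ (a + d))⁻¹) * hpow

theorem UpperAhlforsRegular.lintegral_rpow_edist_mul_rpow_edist_le
    (h : UpperAhlforsRegular μ C d) (hC : 0 < C) {a : ℝ} (ha : -d < a) (had : 2 * a + d < 0) :
    ∃ K > 0, ∀ x z : M,
      ∫⁻ y, edist x y ^ a * edist y z ^ a ∂μ ≤ ENNReal.ofReal K * edist x z ^ (2 * a + d) := by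
  set K₀ := C * 2 ^ d * ((1 - 2⁻¹ ^ (a + d))⁻¹ / 2 ^ (2 * a + d) + (1 - 2 ^ (2 * a + d))⁻¹)
  have hK₀ : 0 < K₀ := by
    have hA : 0 < 1 - (2⁻¹ : ℝ) ^ (a + d) :=
      sub_pos.mpr (Real.rpow_lt_one (by norm_num) (by norm_num) (by linarith))
    have hB : 0 < 1 - (2 : ℝ) ^ (2 * a + d) :=
      sub_pos.mpr (Real.rpow_lt_one_of_one_lt_of_neg (by norm_num) had)
    positivity
  refine ⟨2 * K₀, by positivity, fun x z => ?_⟩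
  rcases eq_or_ne x z with rfl | hxz
  · rw [edist_self, ENNReal.zero_rpow_of_neg had,
      ENNReal.mul_top (ENNReal.ofReal_pos.mpr (by positivity)).ne']
    exact le_top
  have hR : 0 < dist x z := dist_pos.mpr hxz
  have hmaj : ∀ y, edist x y ^ a * edist y z ^ a ≤
      nearFarMajorant x (dist x z) a y + nearFarMajorant z (dist z x) a y := by
    intro y
    rcases le_total (edist x y) (edist y z) with hxy | hzy
    · exact (rpow_edist_mul_rpow_edist_le_nearFarMajorant x y z (by linarith) hxy).trans
        le_self_add
    · rw [mul_comm, edist_comm x y, edist_comm y z]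
      rw [edist_comm x y, edist_comm y z] at hzy
      exact (rpow_edist_mul_rpow_edist_le_nearFarMajorant z y x (by linarith) hzy).trans
        le_add_self
  calc ∫⁻ y, edist x y ^ a * edist y z ^ a ∂μ
      ≤ ∫⁻ y, nearFarMajorant x (dist x z) a y + nearFarMajorant z (dist z x) a y ∂μ :=
        lintegral_mono hmaj
    _ = ∫⁻ y, nearFarMajorant x (dist x z) a y ∂μ + ∫⁻ y, nearFarMajorant z (dist z x) a y ∂μ :=
        lintegral_add_left (by unfold nearFarMajorant; measurability) _
    _ ≤ ENNReal.ofReal (K₀ * dist x z ^ (2 * a + d)) +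
          ENNReal.ofReal (K₀ * dist x z ^ (2 * a + d)) := by
        rw [dist_comm z x]
        gcongr <;> exact h.lintegral_nearFarMajorant_le hC.le _ hR ha had
    _ = ENNReal.ofReal (2 * K₀) * edist x z ^ (2 * a + d) := by
        rw [edist_dist, ENNReal.ofReal_rpow_of_pos hR, ← ENNReal.ofReal_mul (by positivity),
          ← ENNReal.ofReal_add (by positivity) (by positivity)]
        ring_nf

end Convolution

theorem IsSigmaCompact.isSeparable {X : Type*} [TopologicalSpace X]
    [TopologicalSpace.PseudoMetrizableSpace X] {s : Set X} (hs : IsSigmaCompact s) :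
    TopologicalSpace.IsSeparable s := by
  obtain ⟨K, hK, rfl⟩ := hs
  exact TopologicalSpace.isSeparable_iUnion.mpr fun n => (hK n).isSeparable

theorem exists_isSigmaCompact_measure_compl_eq_zero {X : Type*} [TopologicalSpace X] [T2Space X]
    [MeasurableSpace X] [OpensMeasurableSpace X] (ν : Measure X) [SigmaFinite ν]
    [ν.InnerRegular] : ∃ S : Set X, IsSigmaCompact S ∧ ν Sᶜ = 0 := by
  choose K hKsub hKcomp hKlt using fun n m : ℕ =>
    (measurableSet_spanningSets ν n).exists_isCompact_sdiff_lt (measure_spanningSets_lt_top ν n).ne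
      (ENNReal.inv_ne_zero.mpr (ENNReal.natCast_ne_top m))
  refine ⟨⋃ n, ⋃ m, K n m,
    isSigmaCompact_iUnion _ fun n => isSigmaCompact_iUnion_of_isCompact _ (hKcomp n), ?_⟩
  have hnull : ∀ n, ν (spanningSets ν n \ ⋃ n, ⋃ m, K n m) = 0 := by
    intro n
    by_contra hne
    obtain ⟨m, hm⟩ := ENNReal.exists_inv_nat_lt hne
    exact (hm.trans_le (measure_mono (sdiff_subset_sdiff_right
      (subset_iUnion₂ (s := fun n m => K n m) n m)))).not_gt (hKlt n m)
  rw [compl_eq_univ_sdiff, ← iUnion_spanningSets ν, iUnion_sdiff]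
  exact measure_iUnion_null hnull

theorem exists_measurable_eq_edist_of_isSeparable {X : Type*} [PseudoEMetricSpace X]
    [MeasurableSpace X] [OpensMeasurableSpace X] {S : Set X} (hS : TopologicalSpace.IsSeparable S) :
    ∃ E : X × X → ℝ≥0∞, Measurable E ∧ ∀ x, ∀ y ∈ S, E (x, y) = edist x y := by
  obtain ⟨c, hc, hSc⟩ := hS
  refine ⟨fun p => ⨅ u ∈ c, edist p.1 u + edist p.2 u,
    Measurable.biInf c hc fun u _ => (measurable_edist_left.comp measurable_fst).add
      (measurable_edist_left.comp measurable_snd), fun x y hy => ?_⟩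
  refine le_antisymm (ENNReal.le_of_forall_pos_le_add fun ε hε _ => ?_)
    (le_iInf₂ fun u _ => edist_triangle_right x y u)
  obtain ⟨u, hu, hyu⟩ := EMetric.mem_closure_iff.mp (hSc hy) (ε / 2)
    (ENNReal.half_pos (by exact_mod_cast hε.ne'))
  calc ⨅ u ∈ c, edist x u + edist y u
      ≤ edist x u + edist y u := iInf₂_le u hu
    _ ≤ edist x y + edist y u + edist y u := by gcongr; exact edist_triangle x y u
    _ ≤ edist x y + (ε / 2 + ε / 2) := by rw [add_assoc]; gcongr
    _ = edist x y + ε := by rw [ENNReal.add_halves]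

section SigmaFinite

variable {M : Type*} [PseudoMetricSpace M] [MeasurableSpace M]

theorem sigmaFinite_of_measure_ball_lt_top {ν : Measure M} (x₀ : M)
    (h : ∀ r : ℝ, 0 < r → ν (ball x₀ r) < ∞) : SigmaFinite ν :=
  Measure.sigmaFinite_of_countable (countable_range fun n : ℕ => ball x₀ (n + 1))
    (by rintro _ ⟨n, rfl⟩; exact h _ (by positivity))
    (by rw [sUnion_range, iUnion_ball_nat_succ])

theorem UpperAhlforsRegular.sigmaFinite {μ : Measure M} {C d : ℝ}
    (h : UpperAhlforsRegular μ C d) : SigmaFinite μ := by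
  rcases isEmpty_or_nonempty M with _ | ⟨⟨x₀⟩⟩
  · rw [Measure.eq_zero_of_isEmpty μ]
    infer_instance
  · exact sigmaFinite_of_measure_ball_lt_top x₀ fun r hr =>
      (h x₀ r hr).trans_lt ENNReal.ofReal_lt_top

variable [OpensMeasurableSpace M]

theorem measure_ball_lt_top_of_lintegral_rpow_edist_ne_top {ν : Measure M} {b : ℝ} (hb : b ≤ 0)
    {x₀ : M} (h : ∫⁻ z, edist x₀ z ^ b ∂ν ≠ ∞) {r : ℝ} (hr : 0 < r) : ν (ball x₀ r) < ∞ := by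
  have hpos : ENNReal.ofReal r ^ b ≠ 0 :=
    (ENNReal.rpow_pos (ENNReal.ofReal_pos.mpr hr) ENNReal.ofReal_ne_top).ne'
  have hle : ENNReal.ofReal r ^ b * ν (ball x₀ r) ≤ ∫⁻ z, edist x₀ z ^ b ∂ν :=
    calc ENNReal.ofReal r ^ b * ν (ball x₀ r) = ∫⁻ _ in ball x₀ r, ENNReal.ofReal r ^ b ∂ν :=
          (setLIntegral_const _ _).symm
      _ ≤ ∫⁻ z in ball x₀ r, edist x₀ z ^ b ∂ν := by
          refine setLIntegral_mono (measurable_edist_right.pow_const b) fun z hz => ?_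
          rw [mem_ball, dist_comm] at hz
          rw [edist_dist]
          exact ENNReal.rpow_le_rpow_of_nonpos (ENNReal.ofReal_le_ofReal hz.le) hb
      _ ≤ ∫⁻ z, edist x₀ z ^ b ∂ν := setLIntegral_le_lintegral _ _
  refine lt_top_iff_ne_top.mpr fun htop => h (top_unique ?_)
  rwa [htop, ENNReal.mul_top hpos] at hle

theorem sigmaFinite_of_lintegral_lintegral_rpow_edist_ne_top {ν : Measure M} {b : ℝ}
    (hb : b ≤ 0) (h : ∫⁻ x, ∫⁻ z, edist x z ^ b ∂ν ∂ν ≠ ∞) : SigmaFinite ν := by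
  rcases eq_or_ne ν 0 with rfl | hν
  · infer_instance
  obtain ⟨x₀, hx₀⟩ : ∃ x₀ : M, ∫⁻ z, edist x₀ z ^ b ∂ν ≠ ∞ := by
    by_contra! hall
    refine h ?_
    rw [lintegral_congr hall, lintegral_const,
      ENNReal.top_mul (Measure.measure_univ_ne_zero.mpr hν)]
  exact sigmaFinite_of_measure_ball_lt_top x₀ fun r hr =>
    measure_ball_lt_top_of_lintegral_rpow_edist_ne_top hb hx₀ hr

end SigmaFinite

theorem lintegral_sq_lintegral_eq {α β : Type*} [MeasurableSpace α] [MeasurableSpace β]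
    {μ : Measure α} {ν : Measure β} [SFinite μ] [SFinite ν] {K : α × β → ℝ≥0∞}
    (hK : Measurable K) :
    ∫⁻ x, (∫⁻ y, K (x, y) ∂ν) ^ 2 ∂μ = ∫⁻ y, ∫⁻ z, ∫⁻ x, K (x, y) * K (x, z) ∂μ ∂ν ∂ν := by
  have hKx : ∀ x, Measurable fun y => K (x, y) := fun x => hK.comp measurable_prodMk_left
  calc ∫⁻ x, (∫⁻ y, K (x, y) ∂ν) ^ 2 ∂μ
      = ∫⁻ x, ∫⁻ y, ∫⁻ z, K (x, y) * K (x, z) ∂ν ∂ν ∂μ := by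
        refine lintegral_congr fun x => ?_
        rw [sq, lintegral_lintegral_mul (hKx x).aemeasurable (hKx x).aemeasurable]
    _ = ∫⁻ y, ∫⁻ x, ∫⁻ z, K (x, y) * K (x, z) ∂ν ∂μ ∂ν := by
        refine lintegral_lintegral_swap (Measurable.aemeasurable ?_)
        exact Measurable.lintegral_prod_right' (f := fun q : (α × β) × β => K q.1 * K (q.1.1, q.2))
          ((hK.comp measurable_fst).mul (hK.comp (measurable_fst.fst.prodMk measurable_snd)))
    _ = ∫⁻ y, ∫⁻ z, ∫⁻ x, K (x, y) * K (x, z) ∂μ ∂ν ∂ν := by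
        refine lintegral_congr fun y => lintegral_lintegral_swap (Measurable.aemeasurable ?_)
        exact (hK.comp (measurable_fst.prodMk measurable_const)).mul hK

theorem lintegral_sq_lintegral_le_of_lintegral_rpow_edist_mul_le {M : Type*} [MetricSpace M]
    [MeasurableSpace M] [OpensMeasurableSpace M] {μ ν : Measure M} [SFinite μ] [ν.InnerRegular]
    {g : M → M → ℝ≥0∞} {a b c K : ℝ} (hc : 0 < c) (hK : 0 < K) (hb : b ≤ 0)
    (hg : ∀ x y, g x y ≤ ENNReal.ofReal c * edist x y ^ a)
    (hconv : ∀ x z, ∫⁻ y, edist x y ^ a * edist y z ^ a ∂μ ≤ ENNReal.ofReal K * edist x z ^ b) :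
    ∫⁻ x, (∫⁻ y, g x y ∂ν) ^ 2 ∂μ ≤
      ENNReal.ofReal (c ^ 2 * K) * ∫⁻ x, ∫⁻ z, edist x z ^ b ∂ν ∂ν := by
  by_cases hI : ∫⁻ x, ∫⁻ z, edist x z ^ b ∂ν ∂ν = ∞
  · rw [hI, ENNReal.mul_top (ENNReal.ofReal_pos.mpr (by positivity)).ne']
    exact le_top
  have := sigmaFinite_of_lintegral_lintegral_rpow_edist_ne_top hb hI
  -- `M` need not be separable, so `edist` need not be measurable on `M × M`.
  obtain ⟨S, hS, hνS⟩ := exists_isSigmaCompact_measure_compl_eq_zero ν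
  obtain ⟨E, hE, hES⟩ := exists_measurable_eq_edist_of_isSeparable hS.isSeparable
  have hae : ∀ᵐ y ∂ν, y ∈ S := hνS
  calc ∫⁻ x, (∫⁻ y, g x y ∂ν) ^ 2 ∂μ
      ≤ ∫⁻ x, (ENNReal.ofReal c * ∫⁻ y, E (x, y) ^ a ∂ν) ^ 2 ∂μ := by
        refine lintegral_mono fun x => pow_le_pow_left₀ zero_le ?_ 2
        rw [← lintegral_const_mul' _ _ ENNReal.ofReal_ne_top]
        refine lintegral_mono_ae (hae.mono fun y hy => ?_)
        rw [hES x y hy]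
        exact hg x y
    _ = ENNReal.ofReal c ^ 2 * ∫⁻ y, ∫⁻ z, ∫⁻ x, E (x, y) ^ a * E (x, z) ^ a ∂μ ∂ν ∂ν := by
        simp_rw [mul_pow]
        rw [lintegral_const_mul' _ _ (ENNReal.pow_ne_top ENNReal.ofReal_ne_top),
          lintegral_sq_lintegral_eq (hE.pow_const a)]
    _ ≤ ENNReal.ofReal c ^ 2 * ∫⁻ y, ∫⁻ z, ENNReal.ofReal K * edist y z ^ b ∂ν ∂ν := by
        refine mul_le_mul_right (lintegral_mono_ae ?_) _
        refine hae.mono fun y hy => lintegral_mono_ae (hae.mono fun z hz => ?_)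
        simp_rw [hES _ y hy, hES _ z hz, edist_comm _ y]
        exact hconv y z
    _ = ENNReal.ofReal (c ^ 2 * K) * ∫⁻ x, ∫⁻ z, edist x z ^ b ∂ν ∂ν := by
        simp_rw [lintegral_const_mul' _ _ ENNReal.ofReal_ne_top]
        rw [ENNReal.ofReal_mul (by positivity), ENNReal.ofReal_pow hc.le, mul_assoc]

/-- if `d > 4`, the resolvent density satisfies
`g_λ(x,y) ≤ c₆ ϱ(x,y)^{2-d}` and `μ(B(x,r)) ≤ c₇ r^d`, then the Riesz convolution
estimate `∫ ϱ(x,y)^{2-d} ϱ(y,z)^{2-d} dμ(y) ≤ C ϱ(x,z)^{4-d}` holds with `C`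
depending only on `c₇` and `d`; consequently
`‖G_λ ν‖²_{L²(M)} ≤ C' ∬ ϱ(x,z)^{4-d} dν dν` for every nonnegative Radon measure `ν`. -/
theorem stmt12 {M : Type*} [MetricSpace M] [MeasurableSpace M] [BorelSpace M]
    (μ : Measure M) (g : M → M → ℝ≥0∞) (d c₆ c₇ : ℝ)
    (hd : 4 < d) (hc₆ : 0 < c₆) (hc₇ : 0 < c₇)
    (hg : ∀ x y : M, g x y ≤ ENNReal.ofReal c₆ * edist x y ^ (2 - d))
    (hvol : ∀ (x : M) (r : ℝ), 0 < r → μ (Metric.ball x r) ≤ ENNReal.ofReal (c₇ * r ^ d)) :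
    (∃ C : ℝ, 0 < C ∧ ∀ x z : M,
      ∫⁻ y, edist x y ^ (2 - d) * edist y z ^ (2 - d) ∂μ ≤
        ENNReal.ofReal C * edist x z ^ (4 - d)) ∧
    (∃ C' : ℝ, 0 < C' ∧ ∀ ν : Measure M, ν.InnerRegular →
      ∫⁻ x, (∫⁻ y, g x y ∂ν) ^ (2:ℕ) ∂μ ≤
        ENNReal.ofReal C' * ∫⁻ x, ∫⁻ z, edist x z ^ (4 - d) ∂ν ∂ν) := by
  have hμ : UpperAhlforsRegular μ c₇ d := hvol
  have := hμ.sigmaFinite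
  obtain ⟨C, hC, hconv⟩ :=
    hμ.lintegral_rpow_edist_mul_rpow_edist_le hc₇ (a := 2 - d) (by linarith) (by linarith)
  rw [show 2 * (2 - d) + d = 4 - d by ring] at hconv
  exact ⟨⟨C, hC, hconv⟩, c₆ ^ 2 * C, by positivity, fun ν _ =>
    lintegral_sq_lintegral_le_of_lintegral_rpow_edist_mul_le hc₆ hC (by linarith) hg hconv⟩
end
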